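/- Let δ > 0 and let (a_k)_{k≥1} be a real (or complex) sequence, with a_0 := 1. Define (G_δ a)_k = (k(k+δ)/2)·a_{k-1} − k²·a_k + (k(k−δ)/2)·a_{k+1} for k ≥ 1. Then for every integer m ≥ 1, ∑_{k=1}^m [(-δ)^{↑k} / (k·(1+δ)^{↑k})]·(G_δ a)_k = (δ/2)(a_1 − 1) − (1/2)(m−δ)·[(-δ)^{↑m}/(1+δ)^{↑m}]·(a_m − a_{m+1}). -/

import Mathlib

open Finset

/-- Rising factorial (Pochhammer symbol): `x^{↑k} = x(x+1)⋯(x+k-1)`. -/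
noncomputable def risingFac (x : ℝ) (k : ℕ) : ℝ := ∏ j ∈ Finset.range k, (x + j)

/-- The operator `G_δ` acting on sequences with the convention `a 0 = 1`. -/
noncomputable def Gop (δ : ℝ) (a : ℕ → ℝ) (k : ℕ) : ℝ :=
  (k * (k + δ) / 2) * a (k - 1) - (k : ℝ) ^ 2 * a k + (k * (k - δ) / 2) * a (k + 1)

/-!
The weight `w_k = (-δ)^{↑k} / (k (1+δ)^{↑k})` is exactly the one for which `w_k (G_δ a)_k`
telescopes: it equals `T_k - T_{k-1}` with
`T_k = -½ (k - δ) (-δ)^{↑k} / (1+δ)^{↑k} (a_k - a_{k+1})`, as one checks by clearing the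
denominators `k` and `1 + δ + (k - 1)`. Summing gives `T_m - T_0`, and `T_0 = (δ/2)(1 - a_1)`
because `a_0 = 1`.
-/

lemma sum_Icc_one_eq_sum_range {M : Type*} [AddCommMonoid M] (f : ℕ → M) (m : ℕ) :
    ∑ k ∈ Icc 1 m, f k = ∑ k ∈ range m, f (k + 1) := by
  rw [range_eq_Ico, sum_Ico_add' f 0 m 1, zero_add, Ico_add_one_right_eq_Icc]

lemma risingFac_zero (x : ℝ) : risingFac x 0 = 1 := prod_range_zero _

lemma risingFac_succ (x : ℝ) (n : ℕ) : risingFac x (n + 1) = risingFac x n * (x + n) :=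
  prod_range_succ _ n

lemma risingFac_pos {x : ℝ} (hx : 0 < x) (k : ℕ) : 0 < risingFac x k := by
  unfold risingFac
  positivity

noncomputable def gopBoundary (δ : ℝ) (a : ℕ → ℝ) (k : ℕ) : ℝ :=
  -1 / 2 * ((k : ℝ) - δ) * (risingFac (-δ) k / risingFac (1 + δ) k) * (a k - a (k + 1))

lemma gopBoundary_zero (δ : ℝ) (a : ℕ → ℝ) :
    gopBoundary δ a 0 = δ / 2 * (a 0 - a 1) := by
  simp only [gopBoundary, risingFac_zero, Nat.cast_zero, zero_add]
  ring

lemma weighted_Gop_eq_gopBoundary_sub (δ : ℝ) (a : ℕ → ℝ) (n : ℕ)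
    (hden : risingFac (1 + δ) (n + 1) ≠ 0) :
    risingFac (-δ) (n + 1) / ((n + 1 : ℕ) * risingFac (1 + δ) (n + 1)) * Gop δ a (n + 1)
      = gopBoundary δ a (n + 1) - gopBoundary δ a n := by
  rw [risingFac_succ] at hden
  obtain ⟨hrf, hlast⟩ := mul_ne_zero_iff.mp hden
  have hn : ((n : ℝ) + 1) ≠ 0 := by positivity
  simp only [gopBoundary, Gop, risingFac_succ, Nat.add_sub_cancel]
  push_cast
  field_simp
  ring

theorem stmt1_general (δ : ℝ) (hδ : 0 < δ) (a : ℕ → ℝ) (ha0 : a 0 = 1) (m : ℕ) :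
    ∑ k ∈ Finset.Icc 1 m,
        (risingFac (-δ) k / (k * risingFac (1 + δ) k)) * Gop δ a k
      = δ / 2 * (a 1 - 1)
        - 1 / 2 * ((m : ℝ) - δ) * (risingFac (-δ) m / risingFac (1 + δ) m)
          * (a m - a (m + 1)) := by
  rw [sum_Icc_one_eq_sum_range]
  have htelescope : ∀ n ∈ range m,
      risingFac (-δ) (n + 1) / ((n + 1 : ℕ) * risingFac (1 + δ) (n + 1)) * Gop δ a (n + 1)
        = gopBoundary δ a (n + 1) - gopBoundary δ a n :=
    fun n _ => weighted_Gop_eq_gopBoundary_sub δ a n (risingFac_pos (by positivity) _).ne'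
  rw [sum_congr rfl htelescope, sum_range_sub, gopBoundary_zero, ha0, gopBoundary]
  ring

theorem stmt1 (δ : ℝ) (hδ : 0 < δ) (a : ℕ → ℝ) (ha0 : a 0 = 1) (m : ℕ) (hm : 1 ≤ m) :
    ∑ k ∈ Finset.Icc 1 m,
        (risingFac (-δ) k / (k * risingFac (1 + δ) k)) * Gop δ a k
      = δ / 2 * (a 1 - 1)
        - 1 / 2 * ((m : ℝ) - δ) * (risingFac (-δ) m / risingFac (1 + δ) m)
          * (a m - a (m + 1)) :=
  stmt1_general δ hδ a ha0 m
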